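/- With the notation z = k − α/(3β) and c = (α² + 3βδ)/(3β²), the product of the imaginary parts of the two nontrivial symmetries satisfies Im(ν₊)·Im(ν₋) = H(k)·Z(k), where H(k) = c + (Im k)² − 3 (Re z)² and Z(k) = (Im k)² / ( (Im k)² + 3 [Im(w)]² ), provided Im(k) ≠ 0 and w² = z² − (4/3)c with the denominator nonzero. -/

import Mathlib

/-! `Im ν₊ · Im ν₋ = ((Im k)² − 3 (Re w)²)/4`. Taking real and imaginary parts of
`w² = z² − (4/3)c` gives `(Re w)² − (Im w)² = (Re z)² − (Im z)² − 4c/3` and `Re w · Im w = Re z · Im z`;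
these two relations make `((Im z)² − 3 (Re w)²)((Im z)² + 3 (Im w)²) = 4 H (Im z)²`, and `Im z = Im k`. -/

noncomputable def nuPlus (β α : ℝ) (k w : ℂ) : ℂ :=
  -(1 / 2) * (k - (α : ℂ) / (β : ℂ)) + (Real.sqrt 3 / 2 : ℂ) * Complex.I * w

noncomputable def nuMinus (β α : ℝ) (k w : ℂ) : ℂ :=
  -(1 / 2) * (k - (α : ℂ) / (β : ℂ)) - (Real.sqrt 3 / 2 : ℂ) * Complex.I * w

theorem Complex.im_sub_ofReal_div_ofReal (k : ℂ) (a b : ℝ) : (k - (a : ℂ) / (b : ℂ)).im = k.im := by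
  rw [← Complex.ofReal_div, Complex.sub_im, Complex.ofReal_im, sub_zero]

theorem im_nuPlus_mul_im_nuMinus (β α : ℝ) (k w : ℂ) :
    (nuPlus β α k w).im * (nuMinus β α k w).im = (k.im ^ 2 - 3 * w.re ^ 2) / 4 := by
  have hsqrt : Real.sqrt 3 ^ 2 = 3 := Real.sq_sqrt (by norm_num)
  simp only [nuPlus, nuMinus, Complex.add_im, Complex.sub_im, Complex.mul_im, Complex.mul_re,
    Complex.I_re, Complex.I_im]
  norm_num
  linear_combination (-(w.re ^ 2) / 4) * hsqrt

theorem Complex.mul_sq_im_of_sq_eq_sq_sub_ofReal {z w : ℂ} {c : ℝ}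
    (hw : w ^ 2 = z ^ 2 - (4 / 3 : ℂ) * c) :
    (z.im ^ 2 - 3 * w.re ^ 2) * (z.im ^ 2 + 3 * w.im ^ 2) =
      4 * (c + z.im ^ 2 - 3 * z.re ^ 2) * z.im ^ 2 := by
  have hre : w.re ^ 2 - w.im ^ 2 = z.re ^ 2 - z.im ^ 2 - 4 / 3 * c := by
    simpa [sq] using congrArg Complex.re hw
  have him : w.re * w.im = z.re * z.im := by
    have h := congrArg Complex.im hw
    simp only [sq, Complex.mul_im, Complex.sub_im, Complex.ofReal_im, Complex.ofReal_re] at h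
    norm_num at h
    linarith
  linear_combination (-3 * z.im ^ 2) * hre - 9 * (w.re * w.im + z.re * z.im) * him

theorem stmt6_general (β α δ : ℝ) (k w : ℂ) (hk : k.im ≠ 0)
    (hw : w ^ 2 = (k - (α : ℂ) / (3 * (β : ℂ))) ^ 2
        - (4 / 3 : ℂ) * (((α ^ 2 + 3 * β * δ) / (3 * β ^ 2) : ℝ) : ℂ)) :
    (nuPlus β α k w).im * (nuMinus β α k w).im =
      ((α ^ 2 + 3 * β * δ) / (3 * β ^ 2) + k.im ^ 2
          - 3 * (k - (α : ℂ) / (3 * (β : ℂ))).re ^ 2)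
        * (k.im ^ 2 / (k.im ^ 2 + 3 * w.im ^ 2)) := by
  have key := Complex.mul_sq_im_of_sq_eq_sq_sub_ofReal hw
  have hzim : (k - (α : ℂ) / (3 * (β : ℂ))).im = k.im := by
    exact_mod_cast Complex.im_sub_ofReal_div_ofReal k α (3 * β)
  rw [hzim] at key
  have hden : k.im ^ 2 + 3 * w.im ^ 2 ≠ 0 := by positivity
  rw [im_nuPlus_mul_im_nuMinus, mul_div_assoc', eq_div_iff hden]
  linear_combination key / 4

/-- With `z = k − α/(3β)` and `c = (α² + 3βδ)/(3β²)`,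
`Im(ν₊)·Im(ν₋) = H(k)·Z(k)` where `H(k) = c + (Im k)² − 3 (Re z)²` and
`Z(k) = (Im k)² / ((Im k)² + 3 (Im w)²)`, provided `Im k ≠ 0` and `w² = z² − (4/3)c`. -/
theorem stmt6 (β α δ : ℝ) (hβ : 0 < β) (k w : ℂ) (hk : k.im ≠ 0)
    (hw : w ^ 2 = (k - (α : ℂ) / (3 * (β : ℂ))) ^ 2
        - (4 / 3 : ℂ) * (((α ^ 2 + 3 * β * δ) / (3 * β ^ 2) : ℝ) : ℂ)) :
    (nuPlus β α k w).im * (nuMinus β α k w).im =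
      ((α ^ 2 + 3 * β * δ) / (3 * β ^ 2) + k.im ^ 2
          - 3 * (k - (α : ℂ) / (3 * (β : ℂ))).re ^ 2)
        * (k.im ^ 2 / (k.im ^ 2 + 3 * w.im ^ 2)) :=
  stmt6_general β α δ k w hk hw
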